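/- Let Ψ be an M×N integer matrix with entries bounded in absolute value by P, K ≤ M ≤ N, and C = 2^{⌈log₂(√(MN)·P)⌉}, Φ = (1/C)Ψ, δ = 1 − 1/(C²·(KMP²)^{K−1}). Then: Φ is (K,δ)-RIP if and only if Spark(Ψ) > K. -/

import Mathlib

/-!
A nonzero vector in the kernel of `Ψ` supported on at most `K` columns violates the lower RIP
bound, because `1 - δ > 0`. Conversely, let `x` be supported on a set `S` of at most `K` columns
on which, by the spark condition, `Ψ` is injective. The Gram matrix `G = Ψ_Sᵀ Ψ_S` is then
positive definite with integer entries, so `det G ≥ 1`, while `tr G ≤ K M P²`. Since the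
eigenvalues of `G` have product `≥ 1` and sum `≤ K M P²`, the smallest one is at least
`1 / (K M P²)^(K-1)`, which is the lower bound. The upper bound `‖Ψx‖² ≤ M N P² ‖x‖² ≤ C² ‖x‖²`
is Cauchy–Schwarz together with `C ≥ √(MN) P`.
-/

open Finset in
/-- The `(K, δ)`-restricted isometry property for an `M × N` real matrix. -/
def RIP {M N : ℕ} (Φ : Matrix (Fin M) (Fin N) ℝ) (K : ℕ) (δ : ℝ) : Prop :=
  ∀ x : Fin N → ℝ, (Finset.univ.filter fun i => x i ≠ 0).card ≤ K →
    (1 - δ) * (∑ j, x j ^ 2) ≤ (∑ i, (Φ.mulVec x i) ^ 2) ∧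
    (∑ i, (Φ.mulVec x i) ^ 2) ≤ (1 + δ) * (∑ j, x j ^ 2)

open Matrix Finset

lemma le_two_zpow_ceil_logb (v : ℝ) : v ≤ 2 ^ ⌈Real.logb 2 v⌉ := by
  rcases le_or_gt v 0 with hv | hv
  · exact hv.trans (zpow_pos two_pos _).le
  · have h := Int.self_le_zpow_clog (b := 2) one_lt_two v
    rwa [← Real.ceil_logb_natCast hv.le, Nat.cast_ofNat] at h

lemma card_filter_ne_zero_pos {ι : Type*} [Fintype ι] {x : ι → ℝ} (hx : x ≠ 0) :
    0 < #{j | x j ≠ 0} := by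
  obtain ⟨j, hj⟩ := Function.ne_iff.1 hx
  exact card_pos.2 ⟨j, by simpa using hj⟩

lemma sum_eq_sum_subtype_of_forall_notMem {ι M : Type*} [Fintype ι] [AddCommMonoid M]
    {s : Finset ι} {f : ι → M} (hf : ∀ i ∉ s, f i = 0) : ∑ i, f i = ∑ i : s, f i := by
  rw [sum_coe_sort, sum_subset (subset_univ s) fun i _ hi => hf i hi]

lemma sum_sq_le_card_mul_sq {ι : Type*} [Fintype ι] {f : ι → ℝ} {p : ℝ} (hf : ∀ i, |f i| ≤ p) :
    ∑ i, f i ^ 2 ≤ Fintype.card ι * p ^ 2 := by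
  calc ∑ i, f i ^ 2 ≤ ∑ _i : ι, p ^ 2 := sum_le_sum fun i _ => by
        rw [← sq_abs]; exact pow_le_pow_left₀ (abs_nonneg _) (hf i) 2
    _ = Fintype.card ι * p ^ 2 := by rw [sum_const, card_univ, nsmul_eq_mul]

lemma one_div_pow_card_le_of_one_le_prod {ι : Type*} [Fintype ι] {f : ι → ℝ}
    (hf : ∀ i, 0 < f i) {t : ℝ} (hsum : ∑ i, f i ≤ t) (hprod : 1 ≤ ∏ i, f i) (i : ι) :
    1 / t ^ (Fintype.card ι - 1) ≤ f i := by
  classical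
  have hle : ∀ j, f j ≤ t := fun j =>
    (single_le_sum (fun k _ => (hf k).le) (mem_univ j)).trans hsum
  have hrest : ∏ j ∈ univ.erase i, f j ≤ t ^ (Fintype.card ι - 1) := by
    calc ∏ j ∈ univ.erase i, f j ≤ ∏ _j ∈ univ.erase i, t :=
          prod_le_prod (fun j _ => (hf j).le) (fun j _ => hle j)
      _ = t ^ (Fintype.card ι - 1) := by
          rw [prod_const, card_erase_of_mem (mem_univ i), card_univ]
  rw [div_le_iff₀ (pow_pos ((hf i).trans_le (hle i)) _)]
  calc 1 ≤ f i * ∏ j ∈ univ.erase i, f j := by rwa [mul_prod_erase _ _ (mem_univ i)]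
    _ ≤ f i * t ^ (Fintype.card ι - 1) := mul_le_mul_of_nonneg_left hrest (hf i).le

lemma Matrix.IsHermitian.mul_sum_sq_le_dotProduct_mulVec {n : Type*} [Fintype n]
    [DecidableEq n] {G : Matrix n n ℝ} (hG : G.IsHermitian) {c : ℝ}
    (hc : ∀ i, c ≤ hG.eigenvalues i) (x : n → ℝ) :
    c * ∑ i, x i ^ 2 ≤ x ⬝ᵥ G *ᵥ x := by
  set U : Matrix n n ℝ := (hG.eigenvectorUnitary : Matrix n n ℝ)
  set y : n → ℝ := Uᵀ *ᵥ x
  have hstar : star U = Uᵀ := by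
    rw [star_eq_conjTranspose, conjTranspose_eq_transpose_of_trivial]
  have hquad : x ⬝ᵥ G *ᵥ x = ∑ i, hG.eigenvalues i * y i ^ 2 := by
    conv_lhs => rw [hG.spectral_theorem, Unitary.conjStarAlgAut_apply]
    rw [Matrix.mul_assoc, ← mulVec_mulVec, dotProduct_mulVec, ← mulVec_transpose,
      ← mulVec_mulVec, hstar]
    simp only [dotProduct, mulVec_diagonal, Function.comp_apply, RCLike.ofReal_real_eq_id, id]
    exact sum_congr rfl fun i _ => by ring
  have hnorm : ∑ i, y i ^ 2 = ∑ i, x i ^ 2 := by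
    have hUU : U * Uᵀ = 1 := by rw [← hstar]; exact Unitary.coe_mul_star_self _
    have h : y ⬝ᵥ y = x ⬝ᵥ x := by
      rw [dotProduct_mulVec, ← mulVec_transpose, mulVec_mulVec, transpose_transpose, hUU,
        one_mulVec]
    simpa [dotProduct, sq] using h
  rw [hquad, ← hnorm, mul_sum]
  exact sum_le_sum fun i _ => mul_le_mul_of_nonneg_right (hc i) (sq_nonneg _)

/-- The eigenvalues of `G` are positive with sum `≤ t` and product `≥ 1`, so each is at least
`1 / t ^ (n - 1)`. -/
lemma Matrix.PosDef.one_div_pow_card_mul_sum_sq_le {n : Type*} [Fintype n] [DecidableEq n]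
    {G : Matrix n n ℝ} (hG : G.PosDef) {t : ℝ} (htr : G.trace ≤ t) (hdet : 1 ≤ G.det)
    (x : n → ℝ) :
    1 / t ^ (Fintype.card n - 1) * ∑ i, x i ^ 2 ≤ x ⬝ᵥ G *ᵥ x := by
  have hH := hG.isHermitian
  refine hH.mul_sum_sq_le_dotProduct_mulVec
    (one_div_pow_card_le_of_one_le_prod hG.eigenvalues_pos ?_ ?_) x
  · simpa [hH.trace_eq_sum_eigenvalues] using htr
  · simpa [hH.det_eq_prod_eigenvalues] using hdet

lemma mulVec_eq_submatrix_mulVec {m n R : Type*} [Fintype n] [NonUnitalNonAssocSemiring R]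
    (A : Matrix m n R) {s : Finset n} {x : n → R} (hx : ∀ j ∉ s, x j = 0) :
    A *ᵥ x = A.submatrix id ((↑) : s → n) *ᵥ fun j => x j := by
  ext i
  exact sum_eq_sum_subtype_of_forall_notMem fun j hj => by simp [hx j hj]

lemma injective_submatrix_mulVec_of_forall_lt_card {m n : Type*} [Fintype n]
    {A : Matrix m n ℝ} {K : ℕ}
    (hspark : ∀ x : n → ℝ, x ≠ 0 → A *ᵥ x = 0 → K < #{j | x j ≠ 0}) {s : Finset n}
    (hs : #s ≤ K) : Function.Injective (A.submatrix id ((↑) : s → n)).mulVec := by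
  classical
  refine (injective_iff_map_eq_zero (A.submatrix id ((↑) : s → n)).mulVecLin).2 fun w hw => ?_
  set x : n → ℝ := fun j => if h : j ∈ s then w ⟨j, h⟩ else 0
  have hxs : ∀ j ∉ s, x j = 0 := fun j hj => dif_neg hj
  have hxw : (fun j : s => x j) = w := funext fun j => dif_pos j.2
  have hnull : A *ᵥ x = 0 := by rwa [mulVec_eq_submatrix_mulVec A hxs, hxw]
  have hsupp : #{j | x j ≠ 0} ≤ K :=
    (card_le_card fun j hj => by_contra fun hjs => by simp [hxs j hjs] at hj).trans hs
  by_contra hw0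
  have hx0 : x ≠ 0 := fun h => hw0 (by rw [← hxw, h]; rfl)
  exact (hspark x hx0 hnull).not_ge hsupp

lemma abs_map_intCast_le {m n : Type*} {A : Matrix m n ℤ} {p : ℤ} (hA : ∀ i j, |A i j| ≤ p)
    (i : m) (j : n) :
    |A.map (Int.cast : ℤ → ℝ) i j| ≤ p := by
  simpa using (Int.cast_le (R := ℝ)).2 (hA i j)

section

variable {m n : Type*} [Fintype m] [Fintype n]

lemma sum_sq_mulVec_le {A : Matrix m n ℝ} {p : ℝ} (hA : ∀ i j, |A i j| ≤ p) (x : n → ℝ) :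
    ∑ i, (A *ᵥ x) i ^ 2 ≤ Fintype.card m * (Fintype.card n * p ^ 2) * ∑ j, x j ^ 2 := by
  have hrow : ∀ i, (A *ᵥ x) i ^ 2 ≤ Fintype.card n * p ^ 2 * ∑ j, x j ^ 2 := fun i =>
    calc (A *ᵥ x) i ^ 2 ≤ (∑ j, A i j ^ 2) * ∑ j, x j ^ 2 := sum_mul_sq_le_sq_mul_sq _ _ _
      _ ≤ Fintype.card n * p ^ 2 * ∑ j, x j ^ 2 :=
        mul_le_mul_of_nonneg_right (sum_sq_le_card_mul_sq (hA i)) (by positivity)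
  calc ∑ i, (A *ᵥ x) i ^ 2 ≤ ∑ _i : m, Fintype.card n * p ^ 2 * ∑ j, x j ^ 2 :=
        sum_le_sum fun i _ => hrow i
    _ = _ := by rw [sum_const, card_univ, nsmul_eq_mul]; ring

lemma trace_conjTranspose_mul_self_le {A : Matrix m n ℝ} {p : ℝ} (hA : ∀ i j, |A i j| ≤ p) :
    (Aᴴ * A).trace ≤ Fintype.card n * (Fintype.card m * p ^ 2) := by
  calc (Aᴴ * A).trace = ∑ j, ∑ i, A i j ^ 2 := by simp [trace, mul_apply, sq]
    _ ≤ ∑ _j : n, Fintype.card m * p ^ 2 :=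
        sum_le_sum fun j _ => sum_sq_le_card_mul_sq fun i => hA i j
    _ = _ := by rw [sum_const, card_univ, nsmul_eq_mul]

lemma dotProduct_conjTranspose_mul_self_mulVec (A : Matrix m n ℝ) (x : n → ℝ) :
    x ⬝ᵥ (Aᴴ * A) *ᵥ x = ∑ i, (A *ᵥ x) i ^ 2 := by
  rw [← mulVec_mulVec, dotProduct_mulVec, ← mulVec_transpose,
    conjTranspose_eq_transpose_of_trivial, transpose_transpose]
  simp only [dotProduct, sq]

/-- The Gram determinant of an integer matrix is an integer, positive when the columns are
independent. -/
lemma one_le_det_conjTranspose_mul_self_of_int [DecidableEq n] (A : Matrix m n ℤ)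
    (hA : Function.Injective (A.map (Int.cast : ℤ → ℝ)).mulVec) :
    1 ≤ ((A.map (Int.cast : ℤ → ℝ))ᴴ * A.map (Int.cast : ℤ → ℝ)).det := by
  have hpos := (PosDef.conjTranspose_mul_self _ hA).det_pos
  have hcast : ((A.map (Int.cast : ℤ → ℝ))ᴴ * A.map (Int.cast : ℤ → ℝ)).det =
      ((Aᵀ * A).det : ℝ) := by
    rw [Int.cast_det]
    congr 1
    ext i j
    simp [mul_apply]
  rw [hcast] at hpos ⊢
  exact_mod_cast (Int.cast_pos.mp hpos : 0 < (Aᵀ * A).det)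

lemma one_div_pow_card_mul_sum_sq_le_of_int (A : Matrix m n ℤ) {p : ℤ}
    (hA : ∀ i j, |A i j| ≤ p) (hinj : Function.Injective (A.map (Int.cast : ℤ → ℝ)).mulVec)
    (z : n → ℝ) :
    1 / (Fintype.card n * Fintype.card m * (p : ℝ) ^ 2) ^ (Fintype.card n - 1) * ∑ j, z j ^ 2 ≤
      ∑ i, (A.map (Int.cast : ℤ → ℝ) *ᵥ z) i ^ 2 := by
  classical
  rw [← dotProduct_conjTranspose_mul_self_mulVec, mul_assoc]
  exact (PosDef.conjTranspose_mul_self _ hinj).one_div_pow_card_mul_sum_sq_le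
    (trace_conjTranspose_mul_self_le (abs_map_intCast_le hA))
    (one_le_det_conjTranspose_mul_self_of_int A hinj) z

lemma one_div_pow_mul_sum_sq_le_of_sparse (A : Matrix m n ℤ) {p : ℤ} (hp : 1 ≤ p)
    (hA : ∀ i j, |A i j| ≤ p) {K : ℕ} (hKm : K ≤ Fintype.card m)
    (hspark : ∀ x : n → ℝ, x ≠ 0 → A.map (Int.cast : ℤ → ℝ) *ᵥ x = 0 → K < #{j | x j ≠ 0})
    {x : n → ℝ} (hx : #{j | x j ≠ 0} ≤ K) :
    1 / (K * Fintype.card m * (p : ℝ) ^ 2) ^ (K - 1) * ∑ j, x j ^ 2 ≤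
      ∑ i, (A.map (Int.cast : ℤ → ℝ) *ᵥ x) i ^ 2 := by
  classical
  by_cases hx0 : x = 0
  · simp [hx0]
  set s : Finset n := {j | x j ≠ 0}
  have hxs : ∀ j ∉ s, x j = 0 := fun j hj => by simpa [s] using hj
  have hbound := one_div_pow_card_mul_sum_sq_le_of_int (A.submatrix id ((↑) : s → n))
    (fun i j => hA i j) (injective_submatrix_mulVec_of_forall_lt_card hspark hx) (fun j => x j)
  rw [Fintype.card_coe] at hbound
  rw [mulVec_eq_submatrix_mulVec _ hxs,
    sum_eq_sum_subtype_of_forall_notMem (f := fun j => x j ^ 2) fun j hj => by simp [hxs j hj]]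
  refine le_trans (mul_le_mul_of_nonneg_right ?_ (by positivity)) hbound
  have hs1 : (1 : ℝ) ≤ #s := by exact_mod_cast card_filter_ne_zero_pos hx0
  have hm1 : (1 : ℝ) ≤ Fintype.card m := by
    exact_mod_cast (card_filter_ne_zero_pos hx0).trans_le (hx.trans hKm)
  have hp1 : (1 : ℝ) ≤ (p : ℝ) ^ 2 := one_le_pow₀ (by exact_mod_cast hp)
  have ht1 : (1 : ℝ) ≤ #s * Fintype.card m * (p : ℝ) ^ 2 :=
    one_le_mul_of_one_le_of_one_le (one_le_mul_of_one_le_of_one_le hs1 hm1) hp1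
  have hts : (#s : ℝ) * Fintype.card m * (p : ℝ) ^ 2 ≤ K * Fintype.card m * (p : ℝ) ^ 2 := by
    gcongr
  apply one_div_le_one_div_of_le (by positivity)
  calc _ ≤ ((K : ℝ) * Fintype.card m * (p : ℝ) ^ 2) ^ (#s - 1) :=
        pow_le_pow_left₀ (by positivity) hts _
    _ ≤ _ := pow_le_pow_right₀ (ht1.trans hts) (by omega)

end

lemma RIP.mulVec_ne_zero {M N : ℕ} {Φ : Matrix (Fin M) (Fin N) ℝ} {K : ℕ} {δ : ℝ}
    (h : RIP Φ K δ) (hδ : δ < 1) {x : Fin N → ℝ} (hx0 : x ≠ 0) (hx : #{j | x j ≠ 0} ≤ K) :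
    Φ *ᵥ x ≠ 0 := by
  intro hnull
  obtain ⟨j, hj⟩ := Function.ne_iff.1 hx0
  have hpos : 0 < ∑ j, x j ^ 2 :=
    sum_pos' (fun j _ => sq_nonneg _) ⟨j, mem_univ j, by have : x j ≠ 0 := hj; positivity⟩
  have hlo : (1 - δ) * ∑ j, x j ^ 2 ≤ 0 := by simpa [hnull] using (h x hx).1
  exact (mul_pos (sub_pos.2 hδ) hpos).not_ge hlo

lemma rip_inv_smul_of_bounds {M N : ℕ} {B : Matrix (Fin M) (Fin N) ℝ} {K : ℕ} {a c : ℝ}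
    (hc : 0 < c)
    (hB : ∀ x : Fin N → ℝ, #{j | x j ≠ 0} ≤ K →
      a * ∑ j, x j ^ 2 ≤ ∑ i, (B *ᵥ x) i ^ 2 ∧ ∑ i, (B *ᵥ x) i ^ 2 ≤ c ^ 2 * ∑ j, x j ^ 2) :
    RIP (c⁻¹ • B) K (1 - a / c ^ 2) := by
  intro x hx
  obtain ⟨hlo, hup⟩ := hB x hx
  have hc2 : 0 < c ^ 2 := by positivity
  have hscale : ∑ i, ((c⁻¹ • B) *ᵥ x) i ^ 2 = (∑ i, (B *ᵥ x) i ^ 2) / c ^ 2 := by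
    simp only [smul_mulVec, Pi.smul_apply, smul_eq_mul, mul_pow, ← mul_sum, inv_pow,
      div_eq_inv_mul]
  have hlo' : a / c ^ 2 * ∑ j, x j ^ 2 ≤ (∑ i, (B *ᵥ x) i ^ 2) / c ^ 2 := by
    rw [div_mul_eq_mul_div]; exact div_le_div_of_nonneg_right hlo hc2.le
  have hup' : (∑ i, (B *ᵥ x) i ^ 2) / c ^ 2 ≤ ∑ j, x j ^ 2 := by
    rwa [div_le_iff₀ hc2, mul_comm]
  rw [hscale, sub_sub_cancel]
  exact ⟨hlo', by linarith⟩

theorem stmt_10_general {M N : ℕ} (K : ℕ) (hKM : K ≤ M)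
    (Ψ : Matrix (Fin M) (Fin N) ℤ) (P : ℤ) (hP1 : 1 ≤ P) (hP : ∀ i j, |Ψ i j| ≤ P)
    (C : ℝ) (hC : C = 2 ^ (⌈Real.logb 2 (Real.sqrt (M * N) * P)⌉ : ℤ))
    (δ : ℝ) (hδ : δ = 1 - 1 / (C ^ 2 * ((K : ℝ) * M * (P : ℝ) ^ 2) ^ (K - 1))) :
    RIP (fun i j => (Ψ i j : ℝ) / C) K δ ↔
      (∀ x : Fin N → ℝ, x ≠ 0 → (Ψ.map (Int.cast : ℤ → ℝ)).mulVec x = 0 →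
        K < (Finset.univ.filter fun i => x i ≠ 0).card) := by
  set B := Ψ.map (Int.cast : ℤ → ℝ)
  set t : ℝ := K * M * P ^ 2
  have hC0 : 0 < C := hC ▸ zpow_pos two_pos _
  have hCsq : (M : ℝ) * (N * P ^ 2) ≤ C ^ 2 :=
    calc (M : ℝ) * (N * P ^ 2) = (Real.sqrt (M * N) * P) ^ 2 := by
          rw [mul_pow, Real.sq_sqrt (by positivity)]; ring
      _ ≤ C ^ 2 := pow_le_pow_left₀ (by positivity) (hC ▸ le_two_zpow_ceil_logb _) 2
  have hΦ : (fun i j => (Ψ i j : ℝ) / C) = C⁻¹ • B := by ext; simp [B, div_eq_inv_mul]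
  rw [hΦ, hδ, mul_comm (C ^ 2), ← div_div]
  constructor
  · intro hRIP x hx0 hnull
    by_contra! hx
    have hK : (0 : ℝ) < K := by exact_mod_cast (card_filter_ne_zero_pos hx0).trans_le hx
    have hM : (0 : ℝ) < M := hK.trans_le (by exact_mod_cast hKM)
    have hP0 : (0 : ℝ) < P := by exact_mod_cast hP1
    have ht : 0 < t := by positivity
    refine hRIP.mulVec_ne_zero ?_ hx0 hx (by rw [smul_mulVec, hnull, smul_zero])
    have hgap : 0 < 1 / t ^ (K - 1) / C ^ 2 := by positivity
    linarith
  · intro hspark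
    refine rip_inv_smul_of_bounds hC0 fun x hx => ⟨?_, ?_⟩
    · simpa using one_div_pow_mul_sum_sq_le_of_sparse Ψ hP1 hP (by simpa using hKM) hspark hx
    · calc ∑ i, (B *ᵥ x) i ^ 2 ≤ M * (N * P ^ 2) * ∑ j, x j ^ 2 := by
            simpa using sum_sq_mulVec_le (abs_map_intCast_le hP) x
        _ ≤ C ^ 2 * ∑ j, x j ^ 2 := mul_le_mul_of_nonneg_right hCsq (by positivity)

/-- With `Ψ` an `M × N` integer matrix, entries bounded by `P ≥ 1`, `K ≤ M ≤ N`,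
`C = 2^⌈log₂(√(MN)·P)⌉`, `Φ = (1/C)Ψ`, `δ = 1 - 1/(C²·(K·M·P²)^(K-1))`:
`Φ` is `(K,δ)`-RIP iff `Spark(Ψ) > K` (every nonzero nullspace vector has more than `K`
nonzero entries). -/
theorem stmt_10 {M N : ℕ} (K : ℕ) (hKM : K ≤ M) (hMN : M ≤ N) (hK : 0 < K)
    (Ψ : Matrix (Fin M) (Fin N) ℤ) (P : ℤ) (hP1 : 1 ≤ P) (hP : ∀ i j, |Ψ i j| ≤ P)
    (C : ℝ) (hC : C = 2 ^ (⌈Real.logb 2 (Real.sqrt (M * N) * P)⌉ : ℤ))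
    (δ : ℝ) (hδ : δ = 1 - 1 / (C ^ 2 * ((K : ℝ) * M * (P : ℝ) ^ 2) ^ (K - 1))) :
    RIP (fun i j => (Ψ i j : ℝ) / C) K δ ↔
      (∀ x : Fin N → ℝ, x ≠ 0 → (Ψ.map (Int.cast : ℤ → ℝ)).mulVec x = 0 →
        K < (Finset.univ.filter fun i => x i ≠ 0).card) :=
  stmt_10_general K hKM Ψ P hP1 hP C hC δ hδ
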